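/- Let P be a large-tree forcing notion, n < ω, T an n-collage over P, s₀ ∈ 2^n, and S ∈ P with S ⊆ T→s₀. Then there is an n-collage Q over P such that Q ⊆_n T and Q→s₀ = S. -/
import Mathlib


namespace E0L

/-- Finite binary strings `2^{<ω}`. -/
abbrev Str : Type := List Bool

/-- Sets of binary strings (in particular, trees). -/
abbrev Tr : Type := Set Str

/-- The action `s·t` of a string on a string:
`(s·t)(k) = t(k) + s(k) mod 2` for `k < min(|s|,|t|)` and `(s·t)(k) = t(k)` otherwise. -/
def act (s t : Str) : Str := List.ofFn fun k : Fin t.length => Bool.xor (s.getD k false) (t.get k)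

/-- The action `s·T` of a string on a set of strings. -/
def actT (s : Str) (T : Tr) : Tr := (act s) '' T

/-- `T ↾ s = {t ∈ T : s ⊆ t or t ⊆ s}`. -/
def restr (T : Tr) (s : Str) : Tr := {t ∈ T | s <+: t ∨ t <+: s}

/-- `[T]`, the set of infinite branches of `T` (as elements of Cantor space `2^ω`). -/
def branches (T : Tr) : Set (ℕ → Bool) := {x | ∀ n : ℕ, (List.ofFn fun k : Fin n => x k) ∈ T}

/-- `T[s] = {t : s ⊆ t or t ⊂ s}`. -/
def Tbr (s : Str) : Tr := {t | s <+: t ∨ (t <+: s ∧ t ≠ s)}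

/-- `LTwit T r q` : the strings `q i n` witness that `T` is an E0-large tree with stem `r`:
`|q^0_n| = |q^1_n| ≥ 1`, `q^i_n(0) = i`, and `T` consists of all initial segments of strings
of the form `r⌢q^{i(0)}_0⌢…⌢q^{i(n)}_n`. -/
def LTwit (T : Tr) (r : Str) (q : ℕ → Bool → Str) : Prop :=
  (∀ n : ℕ, (q n true).length = (q n false).length ∧ 1 ≤ (q n false).length) ∧
  (∀ n : ℕ, ∀ i : Bool, (q n i).head? = some i) ∧
  T = {t | ∃ n : ℕ, ∃ f : ℕ → Bool,
        t <+: r ++ ((List.range (n+1)).map (fun k => q k (f k))).flatten}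

/-- `T` is an E0-large tree (`T ∈ LT`). -/
def IsLT (T : Tr) : Prop := ∃ r q, LTwit T r q

/-- `stem T` : the longest `s ∈ T` with `T = T↾s`. -/
noncomputable def stem (T : Tr) : Str :=
  Classical.epsilon fun s => s ∈ T ∧ restr T s = T ∧ ∀ t ∈ T, restr T t = T → t.length ≤ s.length

/-- The canonical witness `(r, q)` of an E0-large tree. -/
noncomputable def witness (T : Tr) : Str × (ℕ → Bool → Str) :=
  Classical.epsilon fun rq => LTwit T rq.1 rq.2

/-- Splitting levels computed from a witness: `spl_0 = |r|`, `spl_{n+1} = spl_n + |q^i_n|`. -/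
def splN (r : Str) (q : ℕ → Bool → Str) : ℕ → ℕ
  | 0 => r.length
  | n+1 => splN r q n + (q n false).length

/-- `spl T n`, the `n`-th splitting level of an E0-large tree `T`. -/
noncomputable def spl (T : Tr) (n : ℕ) : ℕ := splN (witness T).1 (witness T).2 n

/-- Simple splitting `T→i = T↾(stem(T)⌢i)`. -/
noncomputable def split1 (T : Tr) (i : Bool) : Tr := restr T (stem T ++ [i])

/-- Iterated splitting `T→s`: `T→Λ = T`, `T→(s⌢i) = (T→s)→i`. -/
noncomputable def splitS (T : Tr) (s : Str) : Tr := s.foldl split1 T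

/-- `S ⊆_n T` : `S ⊆ T` and `spl_k(S) = spl_k(T)` for all `k < n`. -/
def subN (n : ℕ) (S T : Tr) : Prop := S ⊆ T ∧ ∀ k < n, spl S k = spl T k

/-- A large-tree forcing notion: a set of E0-large trees closed under restriction
and under the action of strings. -/
def IsLTF (P : Set Tr) : Prop :=
  (∀ T ∈ P, IsLT T) ∧
  (∀ T ∈ P, ∀ u ∈ T, restr T u ∈ P) ∧
  (∀ T ∈ P, ∀ s : Str, actT s T ∈ P)

/-- `T` is an `n`-collage over `P`: `T ∈ LT` and `T→s ∈ P` for all `s ∈ 2^n`. -/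
def IsCollage (P : Set Tr) (n : ℕ) (T : Tr) : Prop :=
  IsLT T ∧ ∀ s : Str, s.length = n → splitS T s ∈ P

/-- `D` is open dense in `P` (as a set of trees). -/
def OpenDense1 (P D : Set Tr) : Prop :=
  D ⊆ P ∧ (∀ S ∈ P, ∃ T ∈ D, T ⊆ S) ∧ (∀ S ∈ P, ∀ T ∈ D, S ⊆ T → S ∈ D)

/-- `⟨T,T'⟩` is a condition of the conditional product `P ×_{E0} P`. -/
def CondPair (P : Set Tr) (p : Tr × Tr) : Prop :=
  p.1 ∈ P ∧ p.2 ∈ P ∧ ∃ s : Str, actT s p.1 = p.2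

/-- Componentwise order on pairs of trees: `p ≤ q`. -/
def pleq (p q : Tr × Tr) : Prop := p.1 ⊆ q.1 ∧ p.2 ⊆ q.2

/-- Compatibility of two conditions in `P ×_{E0} P`. -/
def Compat (P : Set Tr) (p q : Tr × Tr) : Prop :=
  ∃ r : Tr × Tr, CondPair P r ∧ pleq r p ∧ pleq r q

/-- `D` is pre-dense in `P ×_{E0} P`. -/
def PreDense2 (P : Set Tr) (D : Set (Tr × Tr)) : Prop :=
  ∀ p : Tr × Tr, CondPair P p → ∃ q ∈ D, Compat P p q

/-- `D` is open dense in `P ×_{E0} P`. -/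
def OpenDense2 (P : Set Tr) (D : Set (Tr × Tr)) : Prop :=
  D ⊆ {p | CondPair P p} ∧
  (∀ p : Tr × Tr, CondPair P p → ∃ q ∈ D, pleq q p) ∧
  (∀ p : Tr × Tr, CondPair P p → ∀ q ∈ D, pleq p q → p ∈ D)

/-- A `P ×_{E0} P`-real name `c = ⟨C_n^i⟩`. -/
def IsRealName (P : Set Tr) (c : ℕ → Bool → Set (Tr × Tr)) : Prop :=
  (∀ n : ℕ, ∀ i : Bool, c n i ⊆ {p | CondPair P p}) ∧
  (∀ n : ℕ, PreDense2 P (c n false ∪ c n true)) ∧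
  (∀ n : ℕ, ∀ p ∈ c n false, ∀ q ∈ c n true, ¬ Compat P p q)

/-- `p` directly forces `c(n) = i`. -/
def DFVal (c : ℕ → Bool → Set (Tr × Tr)) (p : Tr × Tr) (n : ℕ) (i : Bool) : Prop :=
  ∃ q ∈ c n i, pleq p q

/-- `p` directly forces `s ⊂ c`. -/
def DFPrefix (c : ℕ → Bool → Set (Tr × Tr)) (p : Tr × Tr) (s : Str) : Prop :=
  ∀ n < s.length, DFVal c p n (s.getD n false)

/-- `p` directly forces `c ∉ [U]`. -/
def DFAvoid (c : ℕ → Bool → Set (Tr × Tr)) (p : Tr × Tr) (U : Tr) : Prop :=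
  ∃ s : Str, s ∉ U ∧ DFPrefix c p s

/-- `p` directly forces `c ≠ d`: there are incomparable strings `s, t` such that
`p` directly forces `s ⊂ c` and `t ⊂ d`. -/
def DFNe (c d : ℕ → Bool → Set (Tr × Tr)) (p : Tr × Tr) : Prop :=
  ∃ s t : Str, ¬ s <+: t ∧ ¬ t <+: s ∧ DFPrefix c p s ∧ DFPrefix d p t

/-- The action `σ·c` of a string on a real name. -/
def actName (σ : Str) (c : ℕ → Bool → Set (Tr × Tr)) : ℕ → Bool → Set (Tr × Tr) :=
  fun n i => if σ.getD n false = true then c n (!i) else c n i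

/-- The name `π_left` of the left generic real. -/
def piLeft : ℕ → Bool → Set (Tr × Tr) := fun n i =>
  {p | ∃ s t : Str, s.length = n+1 ∧ t.length = n+1 ∧ s.getD n false = i ∧ p = (Tbr s, Tbr t)}

/-- The name `π_right` of the right generic real. -/
def piRight : ℕ → Bool → Set (Tr × Tr) := fun n i =>
  {p | ∃ s t : Str, s.length = n+1 ∧ t.length = n+1 ∧ t.getD n false = i ∧ p = (Tbr s, Tbr t)}


section Aux
open List

lemma cons_of_head? {l : Str} {a : Bool} (h : l.head? = some a) : ∃ t, l = a :: t := by
  cases l with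
  | nil => simp at h
  | cons b t => simp at h; exact ⟨t, by rw [h]⟩

lemma act_length (s t : Str) : (act s t).length = t.length := by simp [act]

lemma act_getElem (s t : Str) (k : ℕ) (hk : k < t.length) :
    (act s t)[k]'(by simpa [act_length]) = Bool.xor (s.getD k false) t[k] := by
  simp [act]

lemma act_act (s t : Str) : act s (act s t) = t := by
  apply List.ext_getElem (by simp [act_length])
  intro i h1 h2
  rw [act_getElem _ _ _ (by simpa [act_length] using h2), act_getElem _ _ _ h2]
  cases s.getD i false <;> cases t[i] <;> rfl

lemma act_append {s x : Str} (y : Str) (h : s.length ≤ x.length) :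
    act s (x ++ y) = act s x ++ y := by
  apply List.ext_getElem (by simp [act_length])
  intro i h1 h2
  by_cases hi : i < x.length
  · simp [act, List.getElem_append, hi]
  · have hn : s[i]? = none := List.getElem?_eq_none (le_trans h (not_lt.1 hi))
    simp [act, List.getElem_append, hi, hn]

lemma prefix_getElem {t v : Str} (h : t <+: v) (i : ℕ) (hi : i < t.length) :
    v[i]'(lt_of_lt_of_le hi h.length_le) = t[i] := by
  obtain ⟨w, rfl⟩ := h
  exact List.getElem_append_left hi

lemma act_take {t v : Str} (s : Str) (h : t <+: v) :
    act s t = (act s v).take t.length := by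
  apply List.ext_getElem
  · simp [act_length]
    exact h.length_le
  · intro i h1 h2
    have hi : i < t.length := by simpa [act_length] using h1
    have hiv : i < v.length := lt_of_lt_of_le hi h.length_le
    rw [act_getElem _ _ _ hi, List.getElem_take, act_getElem _ _ _ hiv,
      prefix_getElem h i hi]

lemma act_prefix {t v : Str} (s : Str) (h : t <+: v) : act s t <+: act s v := by
  rw [act_take s h]; exact List.take_prefix _ _

lemma act_prefix_iff {t v : Str} (s : Str) : act s t <+: act s v ↔ t <+: v := by
  refine ⟨fun h => ?_, act_prefix s⟩
  have := act_prefix s h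
  rwa [act_act, act_act] at this

end Aux

section StemUp
open List

/-- Partial stem: `r` followed by the first `m` blocks along `f`. -/
def stemUp (r : Str) (q : ℕ → Bool → Str) (f : ℕ → Bool) (m : ℕ) : Str :=
  r ++ ((List.range m).map (fun k => q k (f k))).flatten

variable {r : Str} {q : ℕ → Bool → Str} {f g : ℕ → Bool} {m m' : ℕ}

@[simp] lemma stemUp_zero : stemUp r q f 0 = r := by simp [stemUp]

lemma stemUp_succ : stemUp r q f (m+1) = stemUp r q f m ++ q m (f m) := by
  simp [stemUp, List.range_succ]

lemma r_prefix_stemUp : r <+: stemUp r q f m := List.prefix_append _ _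

lemma stemUp_mono (h : m ≤ m') : stemUp r q f m <+: stemUp r q f m' := by
  induction m' with
  | zero => rw [Nat.le_zero.1 h]
  | succ k ih =>
    rcases Nat.lt_or_ge m (k+1) with h' | h'
    · exact (ih (Nat.lt_succ_iff.1 h')).trans (by rw [stemUp_succ]; exact List.prefix_append _ _)
    · rw [Nat.le_antisymm h h']

lemma stemUp_congr_f (h : ∀ k < m, f k = g k) : stemUp r q f m = stemUp r q g m := by
  unfold stemUp
  congr 1
  congr 1
  apply List.map_congr_left
  intro k hk
  rw [h k (List.mem_range.1 hk)]

lemma stemUp_congr_q {q' : ℕ → Bool → Str} (h : ∀ k < m, ∀ i, q k i = q' k i) :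
    stemUp r q f m = stemUp r q' f m := by
  unfold stemUp
  congr 1
  congr 1
  apply List.map_congr_left
  intro k hk
  rw [h k (List.mem_range.1 hk)]

lemma stemUp_decomp (a b : ℕ) :
    stemUp r q f (a+b) = stemUp r q f a ++
      ((List.range b).map (fun k => q (a+k) (f (a+k)))).flatten := by
  induction b with
  | zero => simp
  | succ k ih =>
    rw [show a + (k+1) = (a+k)+1 from rfl, stemUp_succ, ih, List.range_succ]
    simp [List.append_assoc]

lemma length_stemUp (hql : ∀ n : ℕ, (q n true).length = (q n false).length) :
    (stemUp r q f m).length = splN r q m := by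
  induction m with
  | zero => simp [splN]
  | succ k ih =>
    rw [stemUp_succ, List.length_append, ih, splN]
    congr 1
    cases hfk : f k
    · rfl
    · exact hql k

lemma splN_mono (h : m ≤ m') : splN r q m ≤ splN r q m' := by
  induction m' with
  | zero => rw [Nat.le_zero.1 h]
  | succ k ih =>
    rcases Nat.lt_or_ge m (k+1) with h' | h'
    · exact le_trans (ih (Nat.lt_succ_iff.1 h')) (Nat.le_add_right _ _)
    · rw [Nat.le_antisymm h h']

lemma splN_strict (hq1 : ∀ n : ℕ, 1 ≤ (q n false).length) (h : m < m') :
    splN r q m < splN r q m' := by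
  calc splN r q m < splN r q (m+1) := by
        have := hq1 m
        show _ < splN r q m + (q m false).length
        omega
    _ ≤ splN r q m' := splN_mono h

lemma head_getElem {l : Str} {a : Bool} (h : l.head? = some a) (hl : 0 < l.length) :
    l[0]'hl = a := by
  obtain ⟨t, rfl⟩ := cons_of_head? h
  rfl

end StemUp

section Wit
open List

variable {T : Tr} {r : Str} {q : ℕ → Bool → Str}

lemma LTwit.mem_iff (hw : LTwit T r q) {t : Str} :
    t ∈ T ↔ ∃ m f, t <+: stemUp r q f (m+1) := by
  rw [hw.2.2]; rfl

lemma LTwit.mem_of_prefix (hw : LTwit T r q) {t : Str} {f : ℕ → Bool} {m : ℕ}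
    (h : t <+: stemUp r q f m) : t ∈ T := by
  rw [hw.mem_iff]
  cases m with
  | zero => exact ⟨0, f, h.trans (stemUp_mono (Nat.zero_le _))⟩
  | succ k => exact ⟨k, f, h⟩

lemma LTwit.prefix_closed (hw : LTwit T r q) {t t' : Str} (h : t' <+: t) (ht : t ∈ T) :
    t' ∈ T := by
  obtain ⟨m, f, hp⟩ := hw.mem_iff.1 ht
  exact hw.mem_of_prefix (h.trans hp)

lemma LTwit.stemUp_mem (hw : LTwit T r q) (f : ℕ → Bool) (m : ℕ) : stemUp r q f m ∈ T :=
  hw.mem_of_prefix (List.prefix_refl _)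

lemma LTwit.r_mem (hw : LTwit T r q) : r ∈ T :=
  hw.mem_of_prefix (r_prefix_stemUp (f := fun _ => false) (m := 0))

lemma LTwit.qlen (hw : LTwit T r q) (j : ℕ) (i : Bool) :
    (q j i).length = (q j false).length := by
  cases i
  · rfl
  · exact (hw.1 j).1

lemma LTwit.qpos (hw : LTwit T r q) (j : ℕ) (i : Bool) : 0 < (q j i).length := by
  rw [hw.qlen]; exact (hw.1 j).2

lemma LTwit.q_getElem_zero (hw : LTwit T r q) (j : ℕ) (i : Bool) :
    (q j i)[0]'(hw.qpos j i) = i :=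
  head_getElem (hw.2.1 j i) _

lemma stemUp_getElem_block (hql : ∀ n : ℕ, (q n true).length = (q n false).length)
    {r : Str} {f : ℕ → Bool} {j d m : ℕ} (hj : j < m) (hd : d < (q j (f j)).length)
    (hidx : splN r q j + d < (stemUp r q f m).length) :
    (stemUp r q f m)[splN r q j + d]'hidx = (q j (f j))[d]'hd := by
  have hpre : stemUp r q f (j+1) <+: stemUp r q f m := stemUp_mono hj
  have hqq : (q j (f j)).length = (q j false).length := by
    cases hfj : f j
    · rfl
    · exact hql j
  have hlen : splN r q j + d < (stemUp r q f (j+1)).length := by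
    rw [length_stemUp hql]
    show _ < splN r q j + (q j false).length
    omega
  rw [prefix_getElem hpre _ hlen, List.getElem_of_eq stemUp_succ]
  have hsl : (stemUp r q f j).length = splN r q j := length_stemUp hql
  rw [List.getElem_append_right (by omega)]
  congr 1
  omega

lemma LTwit.block_bit (hw : LTwit T r q) {t : Str} (ht : t ∈ T) (j d : ℕ)
    (hd : d < (q j false).length) (hlen0 : splN r q j < t.length)
    (hlen : splN r q j + d < t.length) :
    t[splN r q j + d]'hlen
      = (q j (t[splN r q j]'hlen0))[d]'(by rw [hw.qlen]; exact hd) := by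
  obtain ⟨m, f, hp⟩ := hw.mem_iff.1 ht
  have hql := fun n => (hw.1 n).1
  have hq1 := fun n => (hw.1 n).2
  have hlenS : (stemUp r q f (m+1)).length = splN r q (m+1) := length_stemUp hql
  have htle : t.length ≤ splN r q (m+1) := by rw [← hlenS]; exact hp.length_le
  have hjm : j < m+1 := by
    by_contra hc
    have := splN_mono (r := r) (q := q) (not_lt.1 hc)
    omega
  have hd' : d < (q j (f j)).length := by rw [hw.qlen]; exact hd
  have h1 : t[splN r q j + d]'hlen = (q j (f j))[d]'hd' := by
    rw [← prefix_getElem hp _ hlen]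
    exact stemUp_getElem_block hql hjm hd' _
  have h0 : t[splN r q j]'hlen0 = f j := by
    have h0' : t[splN r q j]'hlen0 = (q j (f j))[0]'(hw.qpos j (f j)) := by
      rw [← prefix_getElem hp _ hlen0]
      have := stemUp_getElem_block hql (r := r) (f := f) hjm (d := 0)
        (hw.qpos j (f j)) (hidx := by rw [hlenS]; have := splN_strict (r := r) (q := q) hq1 hjm; omega)
      simpa using this
    rw [h0', hw.q_getElem_zero]
  rw [h1]
  congr 1
  rw [h0]

end Wit

section Uniq
open List

variable {T S' : Tr} {r r' : Str} {q q' : ℕ → Bool → Str}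

lemma comp_getElem {x y : Str} (h : x <+: y ∨ y <+: x) (p : ℕ)
    (hx : p < x.length) (hy : p < y.length) : x[p]'hx = y[p]'hy := by
  rcases h with h | h
  · exact (prefix_getElem h p hx).symm
  · exact prefix_getElem h p hy

lemma LTwit.bit_lt_stem (hw : LTwit T r q) {t : Str} (ht : t ∈ T) {p : ℕ}
    (hpr : p < r.length) (hpt : p < t.length) : t[p]'hpt = r[p]'hpr := by
  obtain ⟨m, f, hp⟩ := hw.mem_iff.1 ht
  rw [← prefix_getElem hp _ hpt,
    ← prefix_getElem (r_prefix_stemUp (q := q) (f := f) (m := m+1)) _ hpr]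

lemma LTwit.rq_mem (hw : LTwit T r q) (i : Bool) : r ++ q 0 i ∈ T := by
  have e : stemUp r q (fun _ => i) 1 = r ++ q 0 i := by rw [stemUp_succ, stemUp_zero]
  refine hw.mem_of_prefix (f := fun _ => i) (m := 1) ?_
  rw [e]

lemma LTwit.rq_getElem (hw : LTwit T r q) (i : Bool) :
    (r ++ q 0 i)[r.length]'(by simpa using hw.qpos 0 i) = i := by
  rw [List.getElem_append_right (le_refl _)]
  have := hw.q_getElem_zero 0 i
  simpa using this

lemma LTwit.comparable (hw : LTwit T r q) {t t' : Str} (ht : t ∈ T)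
    (h : t' <+: r) : t' <+: t ∨ t <+: t' := by
  obtain ⟨m, f, hp⟩ := hw.mem_iff.1 ht
  exact List.prefix_or_prefix_of_prefix (h.trans (r_prefix_stemUp)) hp

lemma stem_prefix_stem (hw : LTwit T r q) (hw' : LTwit S' r' q') (hsub : S' ⊆ T) :
    r <+: r' := by
  have hr'T : r' ∈ T := hsub hw'.r_mem
  have hcomp : r <+: r' ∨ r' <+: r := hw.comparable hr'T (List.prefix_refl r)
  have hle : r.length ≤ r'.length := by
    by_contra hc
    push_neg at hc
    have key : ∀ i : Bool, r[r'.length]'hc = i := by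
      intro i
      have hti : r' ++ q' 0 i ∈ T := hsub (hw'.rq_mem i)
      have hlt : r'.length < (r' ++ q' 0 i).length := by simpa using hw'.qpos 0 i
      have := hw.bit_lt_stem hti hc hlt
      rw [← this, hw'.rq_getElem i]
    have := (key true).symm.trans (key false)
    simp at this
  rcases hcomp with h | h
  · exact h
  · exact (h.eq_of_length (le_antisymm h.length_le hle)).symm ▸ List.prefix_refl _

lemma stem_unique (hw : LTwit T r q) (hw' : LTwit T r' q') : r = r' := by
  have h1 := stem_prefix_stem hw hw' (le_refl T)
  have h2 := stem_prefix_stem hw' hw (le_refl T)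
  exact h1.eq_of_length (le_antisymm h1.length_le h2.length_le)

lemma block_le (hw : LTwit T r q) (hw' : LTwit T r' q') {k : ℕ}
    (hk : splN r q k = splN r' q' k) : (q' k false).length ≤ (q k false).length := by
  by_contra hc
  push_neg at hc
  set a := (q k false).length with ha
  set L := splN r q k with hL
  have ha1 : 1 ≤ a := (hw.1 k).2
  have hql := fun n => (hw.1 n).1
  -- the element of T of length L + a with all-false labels
  set t := stemUp r q (fun _ => false) (k+1) with htdef
  have htlen : t.length = L + a := by
    rw [length_stemUp hql]
    rfl
  have hmem : ∀ i : Bool, t ++ [i] ∈ T := by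
    intro i
    set fi : ℕ → Bool := fun j => if j = k+1 then i else false with hfi
    have e1 : stemUp r q fi (k+1) = t := stemUp_congr_f (by
      intro j hj
      simp [hfi]
      omega)
    have e2 : stemUp r q fi (k+2) = t ++ q (k+1) i := by
      rw [stemUp_succ, e1]
      congr 1
      simp [hfi]
    obtain ⟨w, hwq⟩ := cons_of_head? (hw.2.1 (k+1) i)
    refine hw.mem_of_prefix (f := fi) (m := k+2) ?_
    rw [e2, hwq]
    exact ⟨w, by simp⟩
  have key : ∀ i : Bool, ∀ (h0 : L < (t ++ [i]).length) (h1 : L + a < (t ++ [i]).length),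
      (t ++ [i])[L + a]'h1 = (q' k ((t ++ [i])[L]'h0))[a]'(by rw [hw'.qlen]; omega) := by
    intro i h0 h1
    have := hw'.block_bit (hmem i) k a (by omega) (by rw [← hk]; exact h0)
      (by rw [← hk]
          have h' := htlen
          simp only [List.length_append, List.length_cons, List.length_nil] at h1 ⊢
          omega)
    simp only [← hk] at this
    exact this
  have hbit : ∀ i : Bool, ∀ (h1 : L + a < (t ++ [i]).length), (t ++ [i])[L + a]'h1 = i := by
    intro i h1
    rw [List.getElem_append_right (by omega)]
    simp [htlen]
  have hbit0 : ∀ i : Bool, ∀ (h0 : L < (t ++ [i]).length),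
      (t ++ [i])[L]'h0 = t[L]'(by rw [htlen]; omega) := by
    intro i h0
    exact List.getElem_append_left (by rw [htlen]; omega)
  have hlen1 : ∀ i : Bool, L + a < (t ++ [i]).length := by
    intro i
    simp [htlen]
  have keyv : ∀ i : Bool, i = (q' k (t[L]'(by rw [htlen]; omega)))[a]'(by rw [hw'.qlen]; omega) := by
    intro i
    rw [← hbit i (hlen1 i), key i (by simp only [List.length_append, List.length_cons, List.length_nil]; rw [htlen]; omega) (hlen1 i)]
    congr 1
    rw [hbit0]
  have := (keyv true).trans (keyv false).symm
  simp at this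

lemma splN_unique (hw : LTwit T r q) (hw' : LTwit T r' q') (k : ℕ) :
    splN r q k = splN r' q' k := by
  induction k with
  | zero =>
    show r.length = r'.length
    rw [stem_unique hw hw']
  | succ k ih =>
    show splN r q k + (q k false).length = splN r' q' k + (q' k false).length
    rw [ih, le_antisymm (block_le hw' hw ih.symm) (block_le hw hw' ih)]

lemma spl_eq_of_witness (hw : LTwit T r q) (k : ℕ) : spl T k = splN r q k := by
  have hx : LTwit T (witness T).1 (witness T).2 := by
    have hex : ∃ rq : Str × (ℕ → Bool → Str), LTwit T rq.1 rq.2 := ⟨(r, q), hw⟩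
    exact Classical.epsilon_spec hex
  unfold spl
  exact splN_unique hx hw k

lemma stem_eq (hw : LTwit T r q) : stem T = r := by
  have hA : restr T r = T := by
    ext t
    constructor
    · exact fun ht => ht.1
    · intro ht
      exact ⟨ht, hw.comparable ht (List.prefix_refl r)⟩
  have hB : ∀ s ∈ T, restr T s = T → s.length ≤ r.length := by
    intro s hs hres
    by_contra hc
    push_neg at hc
    have key : ∀ i : Bool, s[r.length]'hc = i := by
      intro i
      have hti : r ++ q 0 i ∈ T := hw.rq_mem i
      have hcomp : s <+: (r ++ q 0 i) ∨ (r ++ q 0 i) <+: s := by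
        have : r ++ q 0 i ∈ restr T s := hres.symm ▸ hti
        exact this.2
      have hlt : r.length < (r ++ q 0 i).length := by simpa using hw.qpos 0 i
      rw [comp_getElem hcomp r.length hc hlt]
      exact hw.rq_getElem i
    have := (key true).symm.trans (key false)
    simp at this
  have hC : r ∈ T ∧ restr T r = T ∧ ∀ t ∈ T, restr T t = T → t.length ≤ r.length :=
    ⟨hw.r_mem, hA, hB⟩
  have hD : ∀ s, (s ∈ T ∧ restr T s = T ∧ ∀ t ∈ T, restr T t = T → t.length ≤ s.length) →
      s = r := by
    rintro s ⟨hs, hres, hmax⟩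
    have h1 : s.length ≤ r.length := hB s hs hres
    have h2 : r.length ≤ s.length := hmax r hw.r_mem hA
    rcases hw.comparable hs (List.prefix_refl r) with h | h
    · exact (h.eq_of_length (le_antisymm (by omega) (by omega))).symm
    · exact h.eq_of_length (by omega)
  have hsat := Classical.epsilon_spec
    (p := fun s => s ∈ T ∧ restr T s = T ∧ ∀ t ∈ T, restr T t = T → t.length ≤ s.length)
    ⟨r, hC⟩
  exact hD _ hsat

end Uniq

section Split
open List

variable {T : Tr} {r : Str} {q : ℕ → Bool → Str}

lemma LTwit_eq {A B : Tr} {r : Str} {q : ℕ → Bool → Str}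
    (hA : LTwit A r q) (hB : LTwit B r q) : A = B :=
  hA.2.2.trans hB.2.2.symm

lemma prefix_stemUp_succ {R : Str} {Q : ℕ → Bool → Str} {F : ℕ → Bool} {m : ℕ} {t : Str}
    (h : t <+: stemUp R Q F m) : ∃ m' F', t <+: stemUp R Q F' (m'+1) := by
  cases m with
  | zero => exact ⟨0, F, h.trans (stemUp_mono (Nat.zero_le _))⟩
  | succ k => exact ⟨k, F, h⟩

lemma stemUp_shift {g : ℕ → Bool} (m : ℕ) :
    stemUp r q g (m+1) = stemUp (r ++ q 0 (g 0)) (fun n => q (n+1)) (fun n => g (n+1)) m := by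
  induction m with
  | zero => rw [stemUp_succ, stemUp_zero, stemUp_zero]
  | succ k ih => rw [stemUp_succ, ih, stemUp_succ]

lemma split1_witness (hw : LTwit T r q) (i : Bool) :
    LTwit (split1 T i) (r ++ q 0 i) (fun n => q (n+1)) := by
  have hri : (r ++ [i] : Str) <+: r ++ q 0 i := by
    obtain ⟨w, hwq⟩ := cons_of_head? (hw.2.1 0 i)
    exact ⟨w, by simp [hwq]⟩
  refine ⟨fun n => hw.1 (n+1), fun n j => hw.2.1 (n+1) j, ?_⟩
  unfold split1
  rw [stem_eq hw]
  ext t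
  constructor
  · rintro ⟨ht, hcomp⟩
    obtain ⟨m, f, hp⟩ := hw.mem_iff.1 ht
    rcases le_or_gt t.length r.length with hle | hlt
    · have htr : t <+: r := List.prefix_of_prefix_length_le hp r_prefix_stemUp hle
      have h1 : (r : Str) <+: r ++ q 0 i := List.prefix_append _ _
      have h2 : (r ++ q 0 i : Str) <+: stemUp (r ++ q 0 i) (fun n => q (n+1))
          (fun _ => false) 1 := r_prefix_stemUp
      exact ⟨0, fun _ => false, (htr.trans h1).trans h2⟩
    · -- t is longer than r
      have hql := fun n => (hw.1 n).1
      have hf0 : f 0 = i := by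
        have hti : t[r.length]'hlt = i := by
          have hcg := comp_getElem (x := r ++ [i]) (y := t) hcomp r.length (by simp) hlt
          rw [← hcg, List.getElem_append_right (le_refl _)]
          simp
        have htf : t[r.length]'hlt = f 0 := by
          have hb := stemUp_getElem_block hql (r := r) (f := f) (j := 0) (d := 0)
            (m := m+1) (Nat.succ_pos m) (hw.qpos 0 (f 0))
            (hidx := by
              rw [length_stemUp hql]
              simpa using splN_strict (r := r) (q := q) (fun n => (hw.1 n).2)
                (Nat.succ_pos m))
          have hb2 : (stemUp r q f (m+1))[splN r q 0 + 0]'(by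
              rw [length_stemUp hql]
              simpa using splN_strict (r := r) (q := q) (fun n => (hw.1 n).2)
                (Nat.succ_pos m)) = f 0 := by
            rw [hb, hw.q_getElem_zero]
          have hidx2 : splN r q 0 + 0 = r.length := by simp [splN]
          simp only [hidx2] at hb2
          rw [← prefix_getElem hp r.length hlt]
          exact hb2
        rw [← htf, hti]
      have hsh : stemUp r q f (m+1) = stemUp (r ++ q 0 i) (fun n => q (n+1))
          (fun n => f (n+1)) m := by
        rw [stemUp_shift, hf0]
      rw [hsh] at hp
      exact prefix_stemUp_succ hp
  · rintro ⟨m, f, hp0⟩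
    have hp : t <+: stemUp (r ++ q 0 i) (fun n => q (n+1)) f (m+1) := hp0
    set g : ℕ → Bool := fun n => match n with | 0 => i | n+1 => f n with hg
    have hsh : stemUp (r ++ q 0 i) (fun n => q (n+1)) f (m+1) = stemUp r q g (m+2) := by
      rw [stemUp_shift (g := g) (m+1)]
    rw [hsh] at hp
    refine ⟨hw.mem_of_prefix hp, ?_⟩
    have h1 : (r ++ [i] : Str) <+: stemUp r q g (m+2) := by
      refine hri.trans ?_
      have : stemUp r q g 1 = r ++ q 0 i := by rw [stemUp_succ, stemUp_zero]
      rw [← this]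
      exact stemUp_mono (by omega)
    exact List.prefix_or_prefix_of_prefix h1 hp

/-- The stem of the iterated splitting `T→s`, computed from a witness. -/
def stemS : Str → (ℕ → Bool → Str) → Str → Str
  | r, _, [] => r
  | r, q, (i :: s) => stemS (r ++ q 0 i) (fun n => q (n+1)) s

lemma splitS_witness {T : Tr} :
    ∀ (s : Str) (r : Str) (q : ℕ → Bool → Str), LTwit T r q →
      LTwit (splitS T s) (stemS r q s) (fun n => q (n + s.length)) := by
  intro s
  induction s generalizing T with
  | nil => intro r q hw; exact hw
  | cons i s ih =>
    intro r q hw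
    have h1 : LTwit (split1 T i) (r ++ q 0 i) (fun n => q (n+1)) := split1_witness hw i
    have h2 := ih (T := split1 T i) (r ++ q 0 i) (fun n => q (n+1)) h1
    have e : splitS T (i :: s) = splitS (split1 T i) s := rfl
    rw [e]
    exact h2

lemma stemS_eq_stemUp :
    ∀ (s : Str) (r : Str) (q : ℕ → Bool → Str),
      stemS r q s = stemUp r q (fun k => s.getD k false) s.length := by
  intro s
  induction s with
  | nil => intro r q; simp [stemS]
  | cons i s ih =>
    intro r q
    show stemS (r ++ q 0 i) (fun n => q (n+1)) s = _
    rw [ih]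
    have := stemUp_shift (r := r) (q := q)
      (g := fun k => (i :: s).getD k false) (s.length)
    rw [List.length_cons, this]
    congr 1

end Split

section MainAux
open List

variable {r : Str} {q : ℕ → Bool → Str}

lemma act_self_getD (x : Str) (i : ℕ) : (act x x).getD i false = false := by
  rcases lt_or_ge i x.length with hi | hi
  · rw [List.getD_eq_getElem _ _ (by simpa [act_length] using hi), act_getElem _ _ _ hi,
      List.getD_eq_getElem _ _ hi]
    simp
  · rw [List.getD_eq_default _ _ (by simpa [act_length] using hi)]

lemma act_self_id (x t : Str) : act (act x x) t = t := by
  apply List.ext_getElem (by simp [act_length])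
  intro i h1 h2
  rw [act_getElem _ _ _ h2, act_self_getD]
  simp

lemma act_act_right (x y : Str) (h : x.length = y.length) : act (act x y) x = y := by
  apply List.ext_getElem (by simp [act_length, h])
  intro i h1 h2
  have hix : i < x.length := by simpa [act_length] using h1
  have hiy : i < y.length := by omega
  rw [act_getElem _ _ _ hix,
    List.getD_eq_getElem _ _ (by simpa [act_length] using hiy),
    act_getElem _ _ _ hiy, List.getD_eq_getElem _ _ hix]
  cases x[i] <;> cases y[i] <;> rfl

lemma act_act_left (x y : Str) (h : x.length = y.length) : act (act x y) y = x := by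
  apply List.ext_getElem (by simp [act_length, h])
  intro i h1 h2
  have hiy : i < y.length := by simpa [act_length] using h1
  have hix : i < x.length := by omega
  rw [act_getElem _ _ _ hiy,
    List.getD_eq_getElem _ _ (by simpa [act_length] using hiy),
    act_getElem _ _ _ hiy, List.getD_eq_getElem _ _ hix]
  cases x[i] <;> cases y[i] <;> rfl

lemma splN_congr_q {q' : ℕ → Bool → Str} {k : ℕ}
    (h : ∀ j < k, (q j false).length = (q' j false).length) :
    splN r q k = splN r q' k := by
  induction k with
  | zero => rfl
  | succ m ih =>
    show splN r q m + (q m false).length = splN r q' m + (q' m false).length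
    rw [ih (fun j hj => h j (by omega)), h m (by omega)]

lemma stemUp_add (r : Str) (q : ℕ → Bool → Str) (f : ℕ → Bool) (a b : ℕ) :
    stemUp r q f (a+b) = stemUp (stemUp r q f a) (fun k => q (k+a)) (fun k => f (k+a)) b := by
  induction b with
  | zero => simp
  | succ c ih =>
    rw [show a + (c+1) = (a+c)+1 from rfl, stemUp_succ, ih, stemUp_succ]
    show _ ++ q (a+c) (f (a+c)) = _ ++ q (c+a) (f (c+a))
    rw [Nat.add_comm a c]

/-- The blocks of the tree `Q` in the main construction. -/
def qQdef (qT qS : ℕ → Bool → Str) (u : Str) (N : ℕ) : ℕ → Bool → Str :=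
  fun k i => if k < N then qT k i else if k = N then qT k i ++ u else qS (k - (N+1)) i

lemma qQdef_lt {qT qS : ℕ → Bool → Str} {u : Str} {N k : ℕ} (h : k < N) (i : Bool) :
    qQdef qT qS u N k i = qT k i := by simp [qQdef, h]

lemma qQdef_N {qT qS : ℕ → Bool → Str} {u : Str} {N : ℕ} (i : Bool) :
    qQdef qT qS u N N i = qT N i ++ u := by simp [qQdef]

lemma qQdef_ge {qT qS : ℕ → Bool → Str} {u : Str} {N k : ℕ} (i : Bool) :
    qQdef qT qS u N (k + (N+1)) i = qS k i := by
  unfold qQdef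
  rw [if_neg (by omega), if_neg (by omega)]
  congr 1
  omega

lemma qQdef_shift {qT qS : ℕ → Bool → Str} {u : Str} {N : ℕ} :
    (fun k => qQdef qT qS u N (k + (N+1))) = qS := by
  funext k i
  exact qQdef_ge i

lemma stemUp_qQ_le {qT qS : ℕ → Bool → Str} {u : Str} {N m : ℕ} {f : ℕ → Bool}
    (h : m ≤ N) : stemUp r (qQdef qT qS u N) f m = stemUp r qT f m :=
  stemUp_congr_q (fun k hk i => qQdef_lt (by omega) i)

lemma stemUp_qQ_n {qT qS : ℕ → Bool → Str} {u : Str} {N : ℕ} {f : ℕ → Bool} :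
    stemUp r (qQdef qT qS u N) f (N+1) = stemUp r qT f (N+1) ++ u := by
  rw [stemUp_succ, stemUp_qQ_le (le_refl N), qQdef_N, stemUp_succ, List.append_assoc]

lemma stemUp_qQ_add {qT qS : ℕ → Bool → Str} {u : Str} {N j : ℕ} {f : ℕ → Bool} :
    stemUp r (qQdef qT qS u N) f ((N+1)+j)
      = stemUp (stemUp r qT f (N+1) ++ u) qS (fun k => f (k+(N+1))) j := by
  rw [stemUp_add, stemUp_qQ_n]
  congr 1
  exact qQdef_shift

end MainAux

/-- Lemma `stf`(2): if `P` is a large-tree forcing notion, `T` an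
`n`-collage over `P`, `s₀ ∈ 2^n`, `S ∈ P`, `S ⊆ T→s₀`, then there is an `n`-collage `Q`
over `P` with `Q ⊆_n T` and `Q→s₀ = S`. -/
theorem stmt13 (P : Set Tr) (hP : IsLTF P) (n : ℕ) (T : Tr) (hT : IsCollage P n T)
    (s₀ : Str) (hs₀ : s₀.length = n) (S : Tr) (hS : S ∈ P) (hsub : S ⊆ splitS T s₀) :
    ∃ Q : Tr, IsCollage P n Q ∧ subN n Q T ∧ splitS Q s₀ = S := by
  cases n with
  | zero =>
    have hs0 : s₀ = [] := List.length_eq_zero_iff.1 hs₀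
    subst hs0
    refine ⟨S, ⟨hP.1 S hS, ?_⟩, ⟨fun x hx => hsub hx, fun k hk => absurd hk (Nat.not_lt_zero k)⟩,
      rfl⟩
    intro s hs
    have : s = [] := List.length_eq_zero_iff.1 hs
    subst this
    exact hS
  | succ N =>
    obtain ⟨hLT, _⟩ := hT
    obtain ⟨rT, qT, hwT⟩ := hLT
    obtain ⟨rS, qS, hwS⟩ := hP.1 S hS
    have hqlT := fun k => (hwT.1 k).1
    have hwT0 := splitS_witness s₀ rT qT hwT
    simp only [hs₀] at hwT0
    set r₀ : Str := stemS rT qT s₀ with hr₀def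
    have hr₀ : r₀ = stemUp rT qT (fun k => s₀.getD k false) (N+1) := by
      rw [hr₀def, stemS_eq_stemUp, hs₀]
    have hr₀pre : r₀ <+: rS := stem_prefix_stem hwT0 hwS hsub
    set u : Str := rS.drop r₀.length with hudef
    have hru : r₀ ++ u = rS := by
      obtain ⟨w, hww⟩ := hr₀pre
      rw [hudef, ← hww, List.drop_left]
    set qQ : ℕ → Bool → Str := qQdef qT qS u N with hqQdef
    have hq1 : ∀ k : ℕ, (qQ k true).length = (qQ k false).length ∧ 1 ≤ (qQ k false).length := by
      intro k
      rcases lt_trichotomy k N with h | h | h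
      · rw [hqQdef, qQdef_lt h, qQdef_lt h]
        exact hwT.1 k
      · subst h
        rw [hqQdef, qQdef_N, qQdef_N]
        constructor
        · rw [List.length_append, List.length_append, (hwT.1 k).1]
        · rw [List.length_append]
          have := (hwT.1 k).2
          omega
      · have hk : k = (k - (N+1)) + (N+1) := by omega
        rw [hqQdef, hk, qQdef_ge, qQdef_ge]
        exact hwS.1 _
    have hq2 : ∀ k : ℕ, ∀ i : Bool, (qQ k i).head? = some i := by
      intro k i
      rcases lt_trichotomy k N with h | h | h
      · rw [hqQdef, qQdef_lt h]
        exact hwT.2.1 k i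
      · subst h
        rw [hqQdef, qQdef_N]
        obtain ⟨w, hww⟩ := cons_of_head? (hwT.2.1 k i)
        rw [hww]
        rfl
      · have hk : k = (k - (N+1)) + (N+1) := by omega
        rw [hqQdef, hk, qQdef_ge]
        exact hwS.2.1 _ i
    set Q : Tr := {t | ∃ m : ℕ, ∃ f : ℕ → Bool,
        t <+: rT ++ ((List.range (m+1)).map (fun k => qQ k (f k))).flatten} with hQdef
    have hwQ : LTwit Q rT qQ := ⟨hq1, hq2, hQdef⟩
    have hXsl : ∀ s : Str, s.length = N+1 → (stemS rT qT s).length = r₀.length := by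
      intro s hs
      rw [stemS_eq_stemUp, hs, length_stemUp hqlT, hr₀, length_stemUp hqlT]
    have hσlen : ∀ s : Str, s.length = N+1 →
        (act r₀ (stemS rT qT s)).length ≤ r₀.length := by
      intro s hs
      rw [act_length, hXsl s hs]
    have hσr₀ : ∀ s : Str, s.length = N+1 →
        act (act r₀ (stemS rT qT s)) r₀ = stemS rT qT s := by
      intro s hs
      exact act_act_right _ _ (hXsl s hs).symm
    have hstem : ∀ s : Str, s.length = N+1 → ∀ (g : ℕ → Bool) (m : ℕ),
        act (act r₀ (stemS rT qT s)) (stemUp rS qS g m)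
          = stemUp (stemS rT qT s ++ u) qS g m := by
      intro s hs g m
      show act _ (rS ++ _) = (stemS rT qT s ++ u) ++ _
      rw [← hru, List.append_assoc, act_append _ (hσlen s hs), hσr₀ s hs, List.append_assoc]
    have key : ∀ s : Str, s.length = N+1 →
        splitS Q s = actT (act r₀ (stemS rT qT s)) S := by
      intro s hs
      have hwQs := splitS_witness s rT qQ hwQ
      simp only [hs] at hwQs
      have e1 : stemS rT qQ s = stemS rT qT s ++ u := by
        rw [stemS_eq_stemUp, stemS_eq_stemUp, hs, hqQdef, stemUp_qQ_n]
      have e2 : (fun k => qQ (k + (N+1))) = qS := by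
        rw [hqQdef]
        exact qQdef_shift
      rw [e1, e2] at hwQs
      refine LTwit_eq hwQs ⟨hwS.1, hwS.2.1, ?_⟩
      ext t
      constructor
      · rintro ⟨v, hv, rfl⟩
        obtain ⟨m, g, hp⟩ := hwS.mem_iff.1 hv
        have h3 := act_prefix (act r₀ (stemS rT qT s)) hp
        rw [hstem s hs g (m+1)] at h3
        exact ⟨m, g, h3⟩
      · rintro ⟨m, g, hp⟩
        have hp' : t <+: stemUp (stemS rT qT s ++ u) qS g (m+1) := hp
        rw [← hstem s hs g (m+1)] at hp'
        have h2 := act_prefix (act r₀ (stemS rT qT s)) hp'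
        rw [act_act] at h2
        exact ⟨act (act r₀ (stemS rT qT s)) t, hwS.mem_of_prefix h2, act_act _ _⟩
    have hact : ∀ s : Str, s.length = N+1 → ∀ v ∈ S,
        act (act r₀ (stemS rT qT s)) v ∈ T := by
      intro s hs v hv
      obtain ⟨M, h, hp⟩ := hwT0.mem_iff.1 (hsub hv)
      have e_main : act (act r₀ (stemS rT qT s))
          (stemUp r₀ (fun k => qT (k + (N+1))) h (M+1))
          = stemUp (stemS rT qT s) (fun k => qT (k + (N+1))) h (M+1) := by
        show act _ (r₀ ++ _) = stemS rT qT s ++ _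
        rw [act_append _ (hσlen s hs), hσr₀ s hs]
      set F : ℕ → Bool := fun k => if k < N+1 then s.getD k false else h (k - (N+1)) with hF
      have t1 : stemUp rT qT F (N+1) = stemS rT qT s := by
        rw [stemS_eq_stemUp, hs]
        exact stemUp_congr_f (fun k hk => by simp only [hF]; rw [if_pos hk])
      have t2 : (fun k => F (k + (N+1))) = h := by
        funext k
        simp only [hF]
        rw [if_neg (by omega)]
        congr 1
        omega
      have e_T : stemUp rT qT F ((N+1)+(M+1))
          = stemUp (stemS rT qT s) (fun k => qT (k + (N+1))) h (M+1) := by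
        rw [stemUp_add rT qT F (N+1) (M+1), t1, t2]
      have h3 := act_prefix (act r₀ (stemS rT qT s)) hp
      rw [e_main, ← e_T] at h3
      exact hwT.mem_of_prefix h3
    have hQT : Q ⊆ T := by
      intro t ht
      rw [hQdef] at ht
      obtain ⟨m, f, hp0⟩ := ht
      have hp : t <+: stemUp rT qQ f (m+1) := hp0
      have hp2 : t <+: stemUp rT qQ f ((N+1) + (m+1)) := hp.trans (stemUp_mono (by omega))
      rw [hqQdef, stemUp_qQ_add] at hp2
      set s' : Str := List.ofFn (fun k : Fin (N+1) => f k) with hs'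
      have hs'len : s'.length = N+1 := by
        rw [hs', List.length_ofFn]
      have hs'stem : stemS rT qT s' = stemUp rT qT f (N+1) := by
        rw [stemS_eq_stemUp, hs'len]
        refine stemUp_congr_f (fun k hk => ?_)
        rw [hs', List.getD_eq_getElem _ _ (by rw [List.length_ofFn]; exact hk),
          List.getElem_ofFn]
      rw [← hs'stem] at hp2
      have hv : stemUp rS qS (fun k => f (k+(N+1))) (m+1) ∈ S := hwS.stemUp_mem _ _
      have h4 := hact s' hs'len _ hv
      rw [hstem s' hs'len] at h4
      exact hwT.prefix_closed hp2 h4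
    have hspl : ∀ k < N+1, spl Q k = spl T k := by
      intro k hk
      rw [spl_eq_of_witness hwQ k, spl_eq_of_witness hwT k]
      refine splN_congr_q (fun j hj => ?_)
      rw [hqQdef, qQdef_lt (by omega)]
    have hid : actT (act r₀ (stemS rT qT s₀)) S = S := by
      rw [← hr₀def]
      ext t
      constructor
      · rintro ⟨v, hv, rfl⟩
        rw [act_self_id]
        exact hv
      · intro htS
        exact ⟨t, htS, act_self_id _ _⟩
    refine ⟨Q, ⟨⟨rT, qQ, hwQ⟩, ?_⟩, ⟨hQT, hspl⟩, ?_⟩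
    · intro s hs
      rw [key s hs]
      exact hP.2.2 S hS _
    · rw [key s₀ hs₀, hid]
end E0L
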